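/- In the short-segment MDP with M > H+1, the suboptimality gap of horizon reduction equals M − (H+1) exactly: if a* is any maximizer of the true objective J and a_greedy is the unique maximizer of the truncated objective J_H, then J(a*) − J(a_greedy) = M − (H+1), and this quantity tends to infinity as M → ∞ for fixed H. -/

import Mathlib

/-!
Every greedy step earns `+1` but a single one already triggers the terminal penalty `M`, so with
`M > H + 1` no policy that acts greedily can recover the penalty: the true return is at most `0`,
attained by the all-patient policy, while the all-greedy policy, the unique maximizer of the
truncated return `H + 1`, has true return `H + 1 - M`.
-/

/-- Truncated return: the number of greedy steps (`true` = greedy, `false` = patient). -/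
def JH (H : ℕ) (a : Fin (H + 1) → Bool) : ℝ :=
  ((Finset.univ.filter fun t => a t = true).card : ℝ)

/-- True (full-horizon) return: `J(a) = J_H(a) − M` if some greedy action is
taken, and `J(a) = 0` otherwise. -/
def J (H : ℕ) (M : ℝ) (a : Fin (H + 1) → Bool) : ℝ :=
  if ∃ t, a t = true then JH H a - M else 0

section

variable {H : ℕ}

lemma JH_le_succ (a : Fin (H + 1) → Bool) : JH H a ≤ H + 1 := by
  have h := Finset.card_filter_le (Finset.univ : Finset (Fin (H + 1))) (fun t => a t = true)
  rw [Finset.card_univ, Fintype.card_fin] at h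
  unfold JH
  exact_mod_cast h

lemma JH_const_true : JH H (fun _ => true) = H + 1 := by
  simp [JH]

lemma eq_const_true_of_JH_eq_succ {a : Fin (H + 1) → Bool} (ha : JH H a = H + 1) :
    a = fun _ => true := by
  have hcard : (Finset.univ.filter fun t => a t = true).card
      = (Finset.univ : Finset (Fin (H + 1))).card := by
    rw [Finset.card_univ, Fintype.card_fin]
    unfold JH at ha
    exact_mod_cast ha
  funext t
  exact Finset.card_filter_eq_iff.mp hcard t (Finset.mem_univ t)

variable {M : ℝ}

lemma J_const_false : J H M (fun _ => false) = 0 := by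
  simp [J]

lemma J_const_true : J H M (fun _ => true) = H + 1 - M := by
  rw [J, if_pos ⟨0, rfl⟩, JH_const_true]

lemma J_nonpos (hM : H + 1 ≤ M) (a : Fin (H + 1) → Bool) : J H M a ≤ 0 := by
  unfold J
  split_ifs
  · linarith [JH_le_succ a]
  · exact le_rfl

lemma J_eq_zero_of_isMax (hM : H + 1 ≤ M) {astar : Fin (H + 1) → Bool}
    (hmax : ∀ a, J H M a ≤ J H M astar) : J H M astar = 0 :=
  le_antisymm (J_nonpos hM astar) (J_const_false ▸ hmax _)

end

/-- With `M > H+1`: the all-greedy policy is the unique maximizer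
of `J_H`, and for every maximizer `a*` of the true objective `J` the suboptimality
gap satisfies `J(a*) − J(a_greedy) = M − (H+1)`; moreover this quantity tends to
infinity as `M → ∞` for fixed `H`. -/
theorem suboptimality_gap_exact (H : ℕ) (M : ℝ) (hM : M > H + 1) :
    (∀ a : Fin (H + 1) → Bool, JH H a ≤ JH H (fun _ => true)) ∧
    (∀ a : Fin (H + 1) → Bool, JH H a = JH H (fun _ => true) → a = fun _ => true) ∧
    (∀ astar : Fin (H + 1) → Bool,
      (∀ a : Fin (H + 1) → Bool, J H M a ≤ J H M astar) →
      J H M astar - J H M (fun _ => true) = M - (H + 1)) ∧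
    Filter.Tendsto (fun M' : ℝ => M' - (H + 1)) Filter.atTop Filter.atTop := by
  refine ⟨fun a => ?_, fun a ha => ?_, fun astar hmax => ?_, ?_⟩
  · exact JH_const_true (H := H) ▸ JH_le_succ a
  · exact eq_const_true_of_JH_eq_succ (JH_const_true (H := H) ▸ ha)
  · rw [J_eq_zero_of_isMax hM.le hmax, J_const_true]
    ring
  · exact Filter.tendsto_atTop_add_const_right _ _ Filter.tendsto_id
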